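/- arXiv:1403.4877 — 6 statements merged into one kernel-verified Lean document; each statement's English description precedes it below -/
import Mathlib

section
/- For every real 2×2 matrix G, the maximum over Q ∈ SO(2) of the Frobenius inner product G : Q = ∑_{i,j} G_{ij} Q_{ij} is attained and equals √(|G|² + 2 det G); in particular |G|² + 2 det G ≥ 0. -/
open Matrix

noncomputable section

/-- Squared Frobenius norm of a real 2×2 matrix. -/
def frobSq (F : Matrix (Fin 2) (Fin 2) ℝ) : ℝ := ∑ i, ∑ j, (F i j) ^ 2

/-- The special orthogonal group SO(2) as a set of matrices. -/
def SO2 : Set (Matrix (Fin 2) (Fin 2) ℝ) := {Q | Qᵀ * Q = 1 ∧ Q.det = 1}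

lemma so2_mem (c s : ℝ) (h : c ^ 2 + s ^ 2 = 1) : !![c, -s; s, c] ∈ SO2 := by
  constructor
  · have ht : (!![c, -s; s, c])ᵀ = !![c, s; -s, c] := by
      ext i j; fin_cases i <;> fin_cases j <;> rfl
    rw [ht, Matrix.one_fin_two]
    ext i j
    fin_cases i <;> fin_cases j <;>
      simp [Matrix.mul_apply, Fin.sum_univ_two] <;> nlinarith
  · simp [Matrix.det_fin_two]; nlinarith

lemma so2_form {Q : Matrix (Fin 2) (Fin 2) ℝ} (hQ : Q ∈ SO2) :
    Q 1 1 = Q 0 0 ∧ Q 0 1 = -(Q 1 0) ∧ (Q 0 0) ^ 2 + (Q 1 0) ^ 2 = 1 := by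
  obtain ⟨h1, h2⟩ := hQ
  have e1 := congrFun (congrFun h1 0) 0
  have e2 := congrFun (congrFun h1 1) 1
  have e3 := congrFun (congrFun h1 0) 1
  simp [Matrix.mul_apply, Fin.sum_univ_two, Matrix.one_apply] at e1 e2 e3
  rw [Matrix.det_fin_two] at h2
  have key : (Q 0 0 - Q 1 1) ^ 2 + (Q 0 1 + Q 1 0) ^ 2 = 0 := by nlinarith
  have h3 : Q 0 0 - Q 1 1 = 0 := by nlinarith [sq_nonneg (Q 0 0 - Q 1 1), sq_nonneg (Q 0 1 + Q 1 0)]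
  have h4 : Q 0 1 + Q 1 0 = 0 := by nlinarith [sq_nonneg (Q 0 0 - Q 1 1), sq_nonneg (Q 0 1 + Q 1 0)]
  exact ⟨by linarith, by linarith, by nlinarith⟩

/-- For every real 2×2 matrix `G`, the maximum over `Q ∈ SO(2)` of the Frobenius
inner product `G : Q` is attained and equals `√(|G|² + 2 det G)`; in particular
`|G|² + 2 det G ≥ 0`. -/
theorem max_frobenius_inner_SO2 (G : Matrix (Fin 2) (Fin 2) ℝ) :
    0 ≤ frobSq G + 2 * G.det ∧
    ∃ Q ∈ SO2,
      (∑ i, ∑ j, G i j * Q i j) = Real.sqrt (frobSq G + 2 * G.det) ∧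
      ∀ Q' ∈ SO2, (∑ i, ∑ j, G i j * Q' i j) ≤ Real.sqrt (frobSq G + 2 * G.det) := by
  set a := G 0 0 + G 1 1 with ha
  set b := G 1 0 - G 0 1 with hb
  have hS : frobSq G + 2 * G.det = a ^ 2 + b ^ 2 := by
    simp [frobSq, Fin.sum_univ_two, Matrix.det_fin_two, ha, hb]; ring
  have hS0 : 0 ≤ frobSq G + 2 * G.det := by rw [hS]; positivity
  refine ⟨hS0, ?_⟩
  set r := Real.sqrt (frobSq G + 2 * G.det) with hr
  have hr2 : r ^ 2 = a ^ 2 + b ^ 2 := by rw [hr, Real.sq_sqrt hS0, hS]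
  have hrn : 0 ≤ r := Real.sqrt_nonneg _
  -- upper bound for all Q'
  have hub : ∀ Q' ∈ SO2, (∑ i, ∑ j, G i j * Q' i j) ≤ r := by
    intro Q' hQ'
    obtain ⟨h1, h2, h3⟩ := so2_form hQ'
    have : (∑ i, ∑ j, G i j * Q' i j) = a * Q' 0 0 + b * Q' 1 0 := by
      simp [Fin.sum_univ_two, h1, h2, ha, hb]; ring
    rw [this]
    nlinarith [sq_nonneg (a * Q' 1 0 - b * Q' 0 0), sq_nonneg (r - (a * Q' 0 0 + b * Q' 1 0))]
  rcases eq_or_lt_of_le hrn with h | h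
  · -- r = 0, so a = b = 0; identity matrix works
    have ha0 : a = 0 ∧ b = 0 := by
      constructor <;> nlinarith [sq_nonneg a, sq_nonneg b]
    refine ⟨_, so2_mem 1 0 (by norm_num), ?_, ?_⟩
    · simp [Fin.sum_univ_two, ← h]
      linarith [ha0.1]
    · simpa [← h] using hub
  · refine ⟨!![a / r, -(b / r); b / r, a / r], so2_mem _ _ ?_, ?_, hub⟩
    · field_simp
      linarith [hr2]
    · simp [Fin.sum_univ_two]
      field_simp
      linear_combination -hr2
end
end

section
/- For every real 2×2 matrix F, the squared Frobenius distance from F to K satisfies dist²(F, K) = g(|Fv|, |Fw|, det F), where v = (1,1)/√2 and w = (1,−1)/√2. -/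
open Matrix

noncomputable section

def U1 (l : ℝ) : Matrix (Fin 2) (Fin 2) ℝ := !![l, 0; 0, 1 / l]

def U2 (l : ℝ) : Matrix (Fin 2) (Fin 2) ℝ := !![1 / l, 0; 0, l]

/-- The two martensitic wells `K = SO(2)U₁ ∪ SO(2)U₂`. -/
def Kset (l : ℝ) : Set (Matrix (Fin 2) (Fin 2) ℝ) :=
  {G | ∃ Q ∈ SO2, G = Q * U1 l ∨ G = Q * U2 l}

/-- Squared Frobenius distance from `F` to the set `K`. -/
def distSqK (l : ℝ) (F : Matrix (Fin 2) (Fin 2) ℝ) : ℝ :=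
  sInf {r | ∃ G ∈ Kset l, r = frobSq (F - G)}

def vvec : Fin 2 → ℝ := ![1 / Real.sqrt 2, 1 / Real.sqrt 2]

def wvec : Fin 2 → ℝ := ![1 / Real.sqrt 2, -(1 / Real.sqrt 2)]

/-- `x(F) = |Fv|`. -/
def xF (F : Matrix (Fin 2) (Fin 2) ℝ) : ℝ := Real.sqrt (∑ i, (F.mulVec vvec i) ^ 2)

/-- `y(F) = |Fw|`. -/
def yF (F : Matrix (Fin 2) (Fin 2) ℝ) : ℝ := Real.sqrt (∑ i, (F.mulVec wvec i) ^ 2)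

def Afun (l x y d : ℝ) : ℝ :=
  (x ^ 2 + y ^ 2) * (l ^ 2 + 1 / l ^ 2) / 2
    + (l ^ 2 - 1 / l ^ 2) * Real.sqrt (x ^ 2 * y ^ 2 - d ^ 2) + 2 * d

def gfun (l x y d : ℝ) : ℝ :=
  x ^ 2 + y ^ 2 + (l ^ 2 + 1 / l ^ 2) - 2 * Real.sqrt (Afun l x y d)

/-!
Writing `Q ∈ SO(2)` as the rotation with first column `(e, g)`, one has
`|F - Q diag(u, u')|² = |F|² + u² + u'² - 2 ⟪(e, g), ρ⟫` for a vector `ρ` depending linearly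
on `F`, so the squared distance to the well `SO(2) diag(u, u')` is `|F|² + u² + u'² - 2 |ρ|`,
and the squared distance to `K` is attained on the well with the larger `|ρ|²`.
For `U₁` and `U₂` the two values of `|ρ|²` have mean `L |F|² / 2 + 2 det F` and half-difference
`M (|F e₁|² - |F e₂|²) / 2`, whose absolute value is `M √(x² y² - d²)` as soon as `M ≥ 0`;
their maximum is therefore `A(x, y, d)`.
-/

lemma isGreatest_dot_unit_circle (a b : ℝ) :
    IsGreatest {t | ∃ e g : ℝ, e ^ 2 + g ^ 2 = 1 ∧ t = e * a + g * b} √(a ^ 2 + b ^ 2) := by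
  refine ⟨?_, ?_⟩
  · rcases (by positivity : (0 : ℝ) ≤ a ^ 2 + b ^ 2).eq_or_lt with h | h
    · obtain ⟨rfl, rfl⟩ : a = 0 ∧ b = 0 := ⟨by nlinarith, by nlinarith⟩
      exact ⟨1, 0, by norm_num, by simp⟩
    · have hρ : √(a ^ 2 + b ^ 2) ^ 2 = a ^ 2 + b ^ 2 := Real.sq_sqrt h.le
      have hρ0 : √(a ^ 2 + b ^ 2) ≠ 0 := (Real.sqrt_pos.2 h).ne'
      refine ⟨a / √(a ^ 2 + b ^ 2), b / √(a ^ 2 + b ^ 2), ?_, ?_⟩ <;> field_simp <;> linarith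
  · rintro _ ⟨e, g, h, rfl⟩
    refine (le_abs_self _).trans (Real.abs_le_sqrt ?_)
    nlinarith [sq_nonneg (e * b - g * a)]

lemma mem_SO2_iff (Q : Matrix (Fin 2) (Fin 2) ℝ) :
    Q ∈ SO2 ↔ ∃ e g : ℝ, e ^ 2 + g ^ 2 = 1 ∧ Q = !![e, -g; g, e] := by
  constructor
  · rintro ⟨hQQ, hdet⟩
    obtain ⟨p, q, r, s, rfl⟩ : ∃ p q r s, Q = !![p, q; r, s] :=
      ⟨_, _, _, _, eta_fin_two Q⟩
    have h00 := congrFun (congrFun hQQ 0) 0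
    have h01 := congrFun (congrFun hQQ 0) 1
    have h11 := congrFun (congrFun hQQ 1) 1
    simp only [Fin.isValue, mul_apply, transpose_apply, of_apply, cons_val', cons_val_zero,
      cons_val_fin_one, Fin.sum_univ_two, cons_val_one, one_apply_eq, ne_eq, zero_ne_one,
      not_false_eq_true, one_apply_ne] at h00 h01 h11
    rw [det_fin_two_of] at hdet
    have hsum : (q + r) ^ 2 + (s - p) ^ 2 = 0 := by nlinarith
    have hq : q = -r := by nlinarith [sq_nonneg (q + r), sq_nonneg (s - p)]
    have hs : s = p := by nlinarith [sq_nonneg (q + r), sq_nonneg (s - p)]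
    exact ⟨p, r, by linarith, by rw [hq, hs]⟩
  · rintro ⟨e, g, h, rfl⟩
    refine ⟨?_, by rw [det_fin_two_of]; linear_combination h⟩
    ext i j
    fin_cases i <;> fin_cases j <;> simp [mul_apply, Fin.sum_univ_two] <;> linarith

lemma frobSq_of (a b c d : ℝ) : frobSq !![a, b; c, d] = a ^ 2 + b ^ 2 + c ^ 2 + d ^ 2 := by
  simp [frobSq, Fin.sum_univ_two, add_assoc]

lemma frobSq_sub_rotation_mul_diagonal (p q r s e g u u' : ℝ) (h : e ^ 2 + g ^ 2 = 1) :
    frobSq (!![p, q; r, s] - !![e, -g; g, e] * !![u, 0; 0, u']) =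
      p ^ 2 + q ^ 2 + r ^ 2 + s ^ 2 + (u ^ 2 + u' ^ 2)
        - 2 * (e * (u * p + u' * s) + g * (u * r - u' * q)) := by
  rw [mul_fin_two, of_sub_of]
  simp only [cons_sub_cons, empty_sub_empty]
  rw [frobSq_of]
  linear_combination (u ^ 2 + u' ^ 2) * h

lemma isLeast_frobSq_sub_well (p q r s u u' : ℝ) :
    IsLeast {t | ∃ Q ∈ SO2, t = frobSq (!![p, q; r, s] - Q * !![u, 0; 0, u'])}
      (p ^ 2 + q ^ 2 + r ^ 2 + s ^ 2 + (u ^ 2 + u' ^ 2)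
        - 2 * √((u * p + u' * s) ^ 2 + (u * r - u' * q) ^ 2)) := by
  set c := p ^ 2 + q ^ 2 + r ^ 2 + s ^ 2 + (u ^ 2 + u' ^ 2)
  have hset : {t | ∃ Q ∈ SO2, t = frobSq (!![p, q; r, s] - Q * !![u, 0; 0, u'])} =
      (fun m => c - 2 * m) ''
        {t | ∃ e g : ℝ, e ^ 2 + g ^ 2 = 1 ∧ t = e * (u * p + u' * s) + g * (u * r - u' * q)} := by
    ext t
    simp only [Set.mem_ofPred_eq, Set.mem_image, mem_SO2_iff]
    constructor <;> rintro ⟨_, ⟨e, g, h, rfl⟩, rfl⟩ <;>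
      exact ⟨_, ⟨e, g, h, rfl⟩, (frobSq_sub_rotation_mul_diagonal p q r s e g u u' h).symm⟩
  rw [hset]
  exact Antitone.map_isGreatest (fun m m' hm => by linarith) (isGreatest_dot_unit_circle _ _)

lemma setOf_frobSq_sub_mem_Kset (l : ℝ) (F : Matrix (Fin 2) (Fin 2) ℝ) :
    {t | ∃ G ∈ Kset l, t = frobSq (F - G)} =
      {t | ∃ Q ∈ SO2, t = frobSq (F - Q * !![l, 0; 0, 1 / l])} ∪
        {t | ∃ Q ∈ SO2, t = frobSq (F - Q * !![1 / l, 0; 0, l])} := by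
  ext t
  simp only [Kset, Set.mem_union, Set.mem_ofPred_eq]
  constructor
  · rintro ⟨G, ⟨Q, hQ, rfl | rfl⟩, rfl⟩
    exacts [Or.inl ⟨Q, hQ, rfl⟩, Or.inr ⟨Q, hQ, rfl⟩]
  · rintro (⟨Q, hQ, rfl⟩ | ⟨Q, hQ, rfl⟩)
    exacts [⟨_, ⟨Q, hQ, Or.inl rfl⟩, rfl⟩, ⟨_, ⟨Q, hQ, Or.inr rfl⟩, rfl⟩]

lemma min_sub_two_mul_sqrt (c X Y : ℝ) :
    min (c - 2 * √X) (c - 2 * √Y) = c - 2 * √(max X Y) := by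
  rw [min_sub_sub_left, ← mul_max_of_nonneg _ _ zero_le_two,
    Real.sqrt_monotone.map_max]

lemma inv_sqrt_two_sq : (√2)⁻¹ ^ 2 = (1 / 2 : ℝ) := by
  rw [inv_pow, Real.sq_sqrt zero_le_two, one_div]

lemma xF_sq (p q r s : ℝ) : xF !![p, q; r, s] ^ 2 = ((p + q) ^ 2 + (r + s) ^ 2) / 2 := by
  rw [xF, Real.sq_sqrt (Finset.sum_nonneg fun i _ => sq_nonneg _)]
  simp only [mulVec, dotProduct, of_apply, cons_val', cons_val_fin_one, vvec, one_div,
    Fin.sum_univ_two, Fin.isValue, cons_val_zero, cons_val_one]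
  linear_combination ((p + q) ^ 2 + (r + s) ^ 2) * inv_sqrt_two_sq

lemma yF_sq (p q r s : ℝ) : yF !![p, q; r, s] ^ 2 = ((p - q) ^ 2 + (r - s) ^ 2) / 2 := by
  rw [yF, Real.sq_sqrt (Finset.sum_nonneg fun i _ => sq_nonneg _)]
  simp only [mulVec, dotProduct, of_apply, cons_val', cons_val_fin_one, wvec, one_div,
    Fin.sum_univ_two, Fin.isValue, cons_val_zero, cons_val_one, mul_neg]
  linear_combination ((p - q) ^ 2 + (r - s) ^ 2) * inv_sqrt_two_sq

lemma Afun_eq_max {l : ℝ} (hl : 1 < l) (p q r s : ℝ) :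
    Afun l (xF !![p, q; r, s]) (yF !![p, q; r, s]) (p * s - q * r) =
      max ((l * p + 1 / l * s) ^ 2 + (l * r - 1 / l * q) ^ 2)
        ((1 / l * p + l * s) ^ 2 + (1 / l * r - l * q) ^ 2) := by
  set X := (l * p + 1 / l * s) ^ 2 + (l * r - 1 / l * q) ^ 2
  set Y := (1 / l * p + l * s) ^ 2 + (1 / l * r - l * q) ^ 2
  have hl2 : 1 < l ^ 2 := one_lt_pow₀ hl two_ne_zero
  have hM : 0 ≤ l ^ 2 - 1 / l ^ 2 :=
    sub_nonneg.2 (((div_le_one (by positivity)).2 hl2.le).trans hl2.le)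
  have hroot : √(xF !![p, q; r, s] ^ 2 * yF !![p, q; r, s] ^ 2 - (p * s - q * r) ^ 2) =
      |p ^ 2 + r ^ 2 - (q ^ 2 + s ^ 2)| / 2 := by
    rw [xF_sq, yF_sq, show ((p + q) ^ 2 + (r + s) ^ 2) / 2 * (((p - q) ^ 2 + (r - s) ^ 2) / 2)
        - (p * s - q * r) ^ 2 = ((p ^ 2 + r ^ 2 - (q ^ 2 + s ^ 2)) / 2) ^ 2 by ring,
      Real.sqrt_sq_eq_abs, abs_div, abs_two]
  have hdiff : X - Y = (l ^ 2 - 1 / l ^ 2) * (p ^ 2 + r ^ 2 - (q ^ 2 + s ^ 2)) := by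
    simp only [X, Y]
    field_simp
    ring
  have hmax : max X Y = (X + Y + |X - Y|) / 2 := by
    linarith [min_add_max X Y, max_sub_min_eq_abs' X Y]
  rw [Afun, hroot, xF_sq, yF_sq, hmax, hdiff, abs_mul, abs_of_nonneg hM]
  simp only [X, Y]
  field_simp
  ring

/-- For every real 2×2 matrix `F`, the squared Frobenius distance from `F` to `K`
equals `g(|Fv|, |Fw|, det F)`. -/
theorem distSq_eq_g (l : ℝ) (hl : 1 < l) (F : Matrix (Fin 2) (Fin 2) ℝ) :
    distSqK l F = gfun l (xF F) (yF F) F.det := by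
  obtain ⟨p, q, r, s, rfl⟩ : ∃ p q r s, F = !![p, q; r, s] := ⟨_, _, _, _, eta_fin_two F⟩
  have hK := (isLeast_frobSq_sub_well p q r s l (1 / l)).union
    (isLeast_frobSq_sub_well p q r s (1 / l) l)
  rw [← setOf_frobSq_sub_mem_Kset] at hK
  rw [distSqK, hK.csInf_eq, add_comm ((1 / l) ^ 2) (l ^ 2), min_sub_two_mul_sqrt, gfun,
    det_fin_two_of, Afun_eq_max hl, xF_sq, yF_sq]
  ring
end
end

section
/- Let ψ : ℝ^{2×2} → ℝ be rank-one convex with ψ(G) ≤ dist²(G, K) for all G ∈ ℝ^{2×2}. Then for every F ∈ ℝ^{2×2}, ψ(F) ≤ h(|Fv|, |Fw|, det F), where v = (1,1)/√2 and w = (1,−1)/√2. -/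
open Matrix

noncomputable section

/-- A function `ψ` on 2×2 matrices is rank-one convex if it is convex along every
rank-one line `t ↦ F + t a⊗b`. -/
def RankOneConvex (ψ : Matrix (Fin 2) (Fin 2) ℝ → ℝ) : Prop :=
  ∀ (F : Matrix (Fin 2) (Fin 2) ℝ) (a b : Fin 2 → ℝ),
    ConvexOn ℝ Set.univ fun t : ℝ => ψ (F + t • vecMulVec a b)

def hfun (l x y d : ℝ) : ℝ :=
  sInf {r | ∃ ξ η : ℝ, x ≤ ξ ∧ y ≤ η ∧ r = gfun l ξ η d}

/-!
Moving `F` along a rank-one line `t ↦ F + t a⊗v` with `a ⟂ (adj F)ᵀ v` keeps `det F` and `Fw`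
fixed while `|(F + t a⊗v) v|²` is a monic quadratic in `t`; it reaches any `ξ² ≥ |Fv|²` once on
each side of `t = 0`, so rank-one convexity bounds `ψ F` by `ψ` at two such matrices. Doing the
same along `a'⊗w` reaches matrices `H` with `|Hv| = ξ`, `|Hw| = η` and `det H = det F`. For those,
`dist²(H, K) ≤ g(ξ, η, det H)`: write `p = (|He₁|² - |He₂|²)/2`, so that
`√(ξ²η² - det² H) = |p|`, take `μ = λ` or `μ = 1/λ` according to the sign of `p`, and compare `H`
with `R_θ diag(μ, 1/μ)`, the angle `θ` being the polar angle of `(μH₁₁ + H₂₂/μ, μH₂₁ - H₁₂/μ)`.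
-/

lemma exists_polar (T S : ℝ) :
    ∃ θ : ℝ, T = √(T ^ 2 + S ^ 2) * Real.cos θ ∧ S = √(T ^ 2 + S ^ 2) * Real.sin θ := by
  refine ⟨(⟨T, S⟩ : ℂ).arg, ?_, ?_⟩
  · simpa [Complex.norm_eq_sqrt_sq_add_sq] using (Complex.norm_mul_cos_arg ⟨T, S⟩).symm
  · simpa [Complex.norm_eq_sqrt_sq_add_sq] using (Complex.norm_mul_sin_arg ⟨T, S⟩).symm

lemma exists_unit_orthogonal (c : Fin 2 → ℝ) : ∃ a : Fin 2 → ℝ, a ⬝ᵥ a = 1 ∧ a ⬝ᵥ c = 0 := by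
  obtain ⟨θ, h0, h1⟩ := exists_polar (c 0) (c 1)
  refine ⟨![-Real.sin θ, Real.cos θ], ?_, ?_⟩
  · simp only [dotProduct, Fin.sum_univ_two, cons_val_zero, cons_val_one]
    linear_combination Real.sin_sq_add_cos_sq θ
  · simp only [dotProduct, Fin.sum_univ_two, cons_val_zero, cons_val_one]
    linear_combination -Real.sin θ * h0 + Real.cos θ * h1

lemma exists_nonpos_nonneg_roots {X ξ : ℝ} (hX : X ≤ ξ ^ 2) (p : ℝ) :
    ∃ s t : ℝ, s ≤ 0 ∧ 0 ≤ t ∧ X + 2 * s * p + s ^ 2 = ξ ^ 2 ∧ X + 2 * t * p + t ^ 2 = ξ ^ 2 := by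
  set r := √(p ^ 2 + (ξ ^ 2 - X))
  have hr : r ^ 2 = p ^ 2 + (ξ ^ 2 - X) := Real.sq_sqrt (by nlinarith)
  have hpr : |p| ≤ r := Real.abs_le_sqrt (by linarith)
  exact ⟨-p - r, -p + r, by linarith [neg_abs_le p], by linarith [le_abs_self p],
    by linear_combination hr, by linear_combination hr⟩

lemma RankOneConvex.le_max {ψ : Matrix (Fin 2) (Fin 2) ℝ → ℝ} (hψ : RankOneConvex ψ)
    (F : Matrix (Fin 2) (Fin 2) ℝ) (a b : Fin 2 → ℝ) {s t : ℝ} (hs : s ≤ 0) (ht : 0 ≤ t) :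
    ψ F ≤ max (ψ (F + s • vecMulVec a b)) (ψ (F + t • vecMulVec a b)) := by
  have h0 : (0 : ℝ) ∈ segment ℝ s t := by
    rw [segment_eq_Icc (hs.trans ht)]
    exact ⟨hs, ht⟩
  simpa using (hψ F a b).le_on_segment (Set.mem_univ s) (Set.mem_univ t) h0

lemma det_add_smul_vecMulVec {R : Type*} [CommRing R] (F : Matrix (Fin 2) (Fin 2) R)
    (a b : Fin 2 → R) (t : R) :
    (F + t • vecMulVec a b).det = F.det + t * (b ⬝ᵥ (adjugate F *ᵥ a)) := by
  simp only [det_fin_two, adjugate_fin_two, Matrix.add_apply, Matrix.smul_apply, vecMulVec_apply,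
    smul_eq_mul, dotProduct, mulVec, Fin.sum_univ_two, of_apply, cons_val', cons_val_zero,
    cons_val_one, cons_val_fin_one]
  ring

lemma add_smul_vecMulVec_mulVec {R : Type*} [CommRing R] {n : Type*} [Fintype n]
    (F : Matrix n n R) (a b u : n → R) (t : R) :
    (F + t • vecMulVec a b) *ᵥ u = F *ᵥ u + (t * (b ⬝ᵥ u)) • a := by
  rw [add_mulVec, smul_mulVec, vecMulVec_mulVec, op_smul_eq_smul, smul_smul]

lemma RankOneConvex.le_of_forall_level {ψ : Matrix (Fin 2) (Fin 2) ℝ → ℝ}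
    (hψ : RankOneConvex ψ) {F : Matrix (Fin 2) (Fin 2) ℝ} {b : Fin 2 → ℝ} {ξ C : ℝ}
    (hb : b ⬝ᵥ b = 1) (hF : ∑ i, (F *ᵥ b) i ^ 2 ≤ ξ ^ 2)
    (hC : ∀ G : Matrix (Fin 2) (Fin 2) ℝ, ∑ i, (G *ᵥ b) i ^ 2 = ξ ^ 2 → G.det = F.det →
      (∀ u, b ⬝ᵥ u = 0 → G *ᵥ u = F *ᵥ u) → ψ G ≤ C) :
    ψ F ≤ C := by
  obtain ⟨a, ha, hadj⟩ := exists_unit_orthogonal (b ᵥ* adjugate F)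
  have hdet (t : ℝ) : (F + t • vecMulVec a b).det = F.det := by
    rw [det_add_smul_vecMulVec, dotProduct_mulVec, dotProduct_comm, hadj, mul_zero, add_zero]
  have hperp (t : ℝ) (u : Fin 2 → ℝ) (hu : b ⬝ᵥ u = 0) :
      (F + t • vecMulVec a b) *ᵥ u = F *ᵥ u := by
    rw [add_smul_vecMulVec_mulVec, hu, mul_zero, zero_smul, add_zero]
  have hnorm (t : ℝ) : ∑ i, ((F + t • vecMulVec a b) *ᵥ b) i ^ 2
      = ∑ i, (F *ᵥ b) i ^ 2 + 2 * t * ((F *ᵥ b) ⬝ᵥ a) + t ^ 2 := by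
    rw [add_smul_vecMulVec_mulVec, hb, mul_one]
    simp only [dotProduct, Fin.sum_univ_two, Pi.add_apply, Pi.smul_apply, smul_eq_mul] at ha ⊢
    linear_combination t ^ 2 * ha
  obtain ⟨s, t, hs, ht, hs', ht'⟩ := exists_nonpos_nonneg_roots hF ((F *ᵥ b) ⬝ᵥ a)
  refine (hψ.le_max F a b hs ht).trans (max_le ?_ ?_)
  · exact hC _ (by rw [hnorm, hs']) (hdet s) (hperp s)
  · exact hC _ (by rw [hnorm, ht']) (hdet t) (hperp t)

lemma frobSq_nonneg (F : Matrix (Fin 2) (Fin 2) ℝ) : 0 ≤ frobSq F := by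
  unfold frobSq
  positivity

lemma distSqK_le {l : ℝ} {G : Matrix (Fin 2) (Fin 2) ℝ} (hG : G ∈ Kset l)
    (F : Matrix (Fin 2) (Fin 2) ℝ) : distSqK l F ≤ frobSq (F - G) :=
  csInf_le ⟨0, by rintro _ ⟨G, -, rfl⟩; exact frobSq_nonneg _⟩ ⟨G, hG, rfl⟩

lemma rotation_mem_SO2 (θ : ℝ) :
    !![Real.cos θ, -Real.sin θ; Real.sin θ, Real.cos θ] ∈ SO2 := by
  constructor
  · ext i j
    fin_cases i <;> fin_cases j <;> simp [mul_apply, Fin.sum_univ_two, ← sq, mul_comm]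
  · simp [det_fin_two_of, ← sq]

lemma mul_diag_mem_Kset {l μ : ℝ} (hμ : μ = l ∨ μ = 1 / l) {Q : Matrix (Fin 2) (Fin 2) ℝ}
    (hQ : Q ∈ SO2) : Q * !![μ, 0; 0, 1 / μ] ∈ Kset l := by
  refine ⟨Q, hQ, ?_⟩
  rcases hμ with rfl | rfl
  · exact Or.inl rfl
  · exact Or.inr (by rw [one_div_one_div, U2])

lemma distSqK_le_of_diag {l μ : ℝ} (hμ0 : μ ≠ 0) (hμ : μ = l ∨ μ = 1 / l)
    (F : Matrix (Fin 2) (Fin 2) ℝ) :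
    distSqK l F ≤ frobSq F + (μ ^ 2 + 1 / μ ^ 2)
      - 2 * √(μ ^ 2 * (F 0 0 ^ 2 + F 1 0 ^ 2) + (F 0 1 ^ 2 + F 1 1 ^ 2) / μ ^ 2 + 2 * F.det) := by
  set T := μ * F 0 0 + F 1 1 / μ
  set S := μ * F 1 0 - F 0 1 / μ
  have hTS : T ^ 2 + S ^ 2
      = μ ^ 2 * (F 0 0 ^ 2 + F 1 0 ^ 2) + (F 0 1 ^ 2 + F 1 1 ^ 2) / μ ^ 2 + 2 * F.det := by
    rw [det_fin_two]
    simp only [T, S]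
    field_simp
    ring
  obtain ⟨θ, hT, hS⟩ := exists_polar T S
  rw [hTS] at hT hS
  set ρ := √(μ ^ 2 * (F 0 0 ^ 2 + F 1 0 ^ 2) + (F 0 1 ^ 2 + F 1 1 ^ 2) / μ ^ 2 + 2 * F.det)
  refine (distSqK_le (mul_diag_mem_Kset hμ (rotation_mem_SO2 θ)) F).trans_eq ?_
  have hfrob : frobSq (F - !![Real.cos θ, -Real.sin θ; Real.sin θ, Real.cos θ] * !![μ, 0; 0, 1 / μ])
      = frobSq F + (μ ^ 2 + 1 / μ ^ 2) - 2 * (Real.cos θ * T + Real.sin θ * S) := by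
    rw [mul_fin_two]
    simp only [frobSq, Fin.sum_univ_two, Matrix.sub_apply, of_apply, cons_val', cons_val_zero,
      cons_val_one, cons_val_fin_one, T, S]
    field_simp
    linear_combination (μ ^ 4 + 1) * Real.cos_sq_add_sin_sq θ
  rw [hfrob]
  linear_combination -2 * Real.cos θ * hT - 2 * Real.sin θ * hS - 2 * ρ * Real.cos_sq_add_sin_sq θ

lemma one_div_sqrt_two_sq : (1 / √2) ^ 2 = (1 / 2 : ℝ) := by
  rw [div_pow, Real.sq_sqrt zero_le_two, one_pow]

lemma sum_sq_mulVec_vvec (F : Matrix (Fin 2) (Fin 2) ℝ) :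
    ∑ i, (F *ᵥ vvec) i ^ 2 = ((F 0 0 + F 0 1) ^ 2 + (F 1 0 + F 1 1) ^ 2) / 2 := by
  simp only [mulVec, dotProduct, vvec, Fin.sum_univ_two, cons_val_zero, cons_val_one,
    cons_val_fin_one]
  linear_combination ((F 0 0 + F 0 1) ^ 2 + (F 1 0 + F 1 1) ^ 2) * one_div_sqrt_two_sq

lemma sum_sq_mulVec_wvec (F : Matrix (Fin 2) (Fin 2) ℝ) :
    ∑ i, (F *ᵥ wvec) i ^ 2 = ((F 0 0 - F 0 1) ^ 2 + (F 1 0 - F 1 1) ^ 2) / 2 := by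
  simp only [mulVec, dotProduct, wvec, Fin.sum_univ_two, cons_val_zero, cons_val_one,
    cons_val_fin_one]
  linear_combination ((F 0 0 - F 0 1) ^ 2 + (F 1 0 - F 1 1) ^ 2) * one_div_sqrt_two_sq

lemma vvec_dotProduct_self : vvec ⬝ᵥ vvec = 1 := by
  simp only [dotProduct, vvec, Fin.sum_univ_two, cons_val_zero, cons_val_one, cons_val_fin_one,
    ← sq]
  linear_combination 2 * one_div_sqrt_two_sq

lemma wvec_dotProduct_self : wvec ⬝ᵥ wvec = 1 := by
  simp only [dotProduct, wvec, Fin.sum_univ_two, cons_val_zero, cons_val_one, cons_val_fin_one,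
    ← sq]
  linear_combination 2 * one_div_sqrt_two_sq

lemma vvec_dotProduct_wvec : vvec ⬝ᵥ wvec = 0 := by
  simp [vvec, wvec, dotProduct, Fin.sum_univ_two]

lemma distSqK_le_gfun {l : ℝ} (hl : l ≠ 0) {F : Matrix (Fin 2) (Fin 2) ℝ} {ξ η : ℝ}
    (hξ : ∑ i, (F *ᵥ vvec) i ^ 2 = ξ ^ 2) (hη : ∑ i, (F *ᵥ wvec) i ^ 2 = η ^ 2) :
    distSqK l F ≤ gfun l ξ η F.det := by
  rw [sum_sq_mulVec_vvec] at hξ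
  rw [sum_sq_mulVec_wvec] at hη
  set p := (F 0 0 ^ 2 + F 1 0 ^ 2 - F 0 1 ^ 2 - F 1 1 ^ 2) / 2
  have hfrob : ξ ^ 2 + η ^ 2 = frobSq F := by
    simp only [frobSq, Fin.sum_univ_two]
    linear_combination -(hξ + hη)
  have hroot : √(ξ ^ 2 * η ^ 2 - F.det ^ 2) = |p| := by
    rw [← Real.sqrt_sq_eq_abs, det_fin_two]
    congr 1
    linear_combination (-ξ ^ 2) * hη - ((F 0 0 - F 0 1) ^ 2 + (F 1 0 - F 1 1) ^ 2) / 2 * hξ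
  unfold gfun Afun
  rw [hroot, hfrob]
  rcases le_or_gt 0 p with hp | hp
  · rw [abs_of_nonneg hp]
    convert distSqK_le_of_diag hl (Or.inl rfl) F using 4
    simp only [frobSq, Fin.sum_univ_two, p]
    ring
  · rw [abs_of_neg hp]
    convert distSqK_le_of_diag (one_div_ne_zero hl) (Or.inr rfl) F using 3
    · rw [_root_.one_div_pow, one_div_one_div, add_comm]
    · rw [_root_.one_div_pow, one_div (l ^ 2), div_inv_eq_mul]
      congr 1
      simp only [frobSq, Fin.sum_univ_two, p]
      ring

/-- Any rank-one convex `ψ ≤ dist²(·,K)` satisfies `ψ(F) ≤ h(|Fv|, |Fw|, det F)`. -/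
theorem rankOneConvex_le_h (l : ℝ) (hl : 1 < l)
    (ψ : Matrix (Fin 2) (Fin 2) ℝ → ℝ) (hψ : RankOneConvex ψ)
    (hle : ∀ G, ψ G ≤ distSqK l G) (F : Matrix (Fin 2) (Fin 2) ℝ) :
    ψ F ≤ hfun l (xF F) (yF F) F.det := by
  refine le_csInf ⟨_, xF F, yF F, le_rfl, le_rfl, rfl⟩ ?_
  rintro _ ⟨ξ, η, hξ, hη, rfl⟩
  refine hψ.le_of_forall_level vvec_dotProduct_self (Real.sqrt_le_iff.1 hξ).2 ?_
  intro G hGv hGdet hGperp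
  have hGw : ∑ i, (G *ᵥ wvec) i ^ 2 ≤ η ^ 2 := by
    rw [hGperp wvec vvec_dotProduct_wvec]
    exact (Real.sqrt_le_iff.1 hη).2
  refine hψ.le_of_forall_level wvec_dotProduct_self hGw ?_
  intro H hHw hHdet hHperp
  have hHv : ∑ i, (H *ᵥ vvec) i ^ 2 = ξ ^ 2 := by
    rwa [hHperp vvec (by rw [dotProduct_comm, vvec_dotProduct_wvec])]
  calc ψ H ≤ distSqK l H := hle H
    _ ≤ gfun l ξ η H.det := distSqK_le_gfun (zero_lt_one.trans hl).ne' hHv hHw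
    _ = gfun l ξ η F.det := by rw [hHdet, hGdet]
end
end

section
/- For all real numbers x > 0, y > 0, and d with x²y² > d², the symmetric 3×3 matrix with rows (x²y⁴, 2d²xy − x³y³, −dxy²), (2d²xy − x³y³, x⁴y², −dx²y), (−dxy², −dx²y, x²y²) is positive semidefinite. -/
open Matrix

/-- For `x, y > 0` and `x²y² > d²`, the 3×3 matrix with rows
`(x²y⁴, 2d²xy − x³y³, −dxy²)`, `(2d²xy − x³y³, x⁴y², −dx²y)`, `(−dxy², −dx²y, x²y²)`
is positive semidefinite: `ζᵀ M ζ ≥ 0` for all `ζ ∈ ℝ³`. -/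
theorem matrix_posSemidef (x y d : ℝ) (hx : 0 < x) (hy : 0 < y)
    (hd : d ^ 2 < x ^ 2 * y ^ 2) :
    ∀ ζ : Fin 3 → ℝ,
      0 ≤ ζ ⬝ᵥ
        ((!![x ^ 2 * y ^ 4, 2 * d ^ 2 * x * y - x ^ 3 * y ^ 3, -d * x * y ^ 2;
            2 * d ^ 2 * x * y - x ^ 3 * y ^ 3, x ^ 4 * y ^ 2, -d * x ^ 2 * y;
            -d * x * y ^ 2, -d * x ^ 2 * y, x ^ 2 * y ^ 2]).mulVec ζ) := by
  intro ζ
  simp [dotProduct, mulVec, Fin.sum_univ_three]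
  nlinarith [sq_nonneg (y * ζ 0 - x * ζ 1), sq_nonneg (x * y * ζ 2 - d * (y * ζ 0 + x * ζ 1)),
    mul_nonneg (le_of_lt (sub_pos.2 hd)) (sq_nonneg (y * ζ 0 - x * ζ 1))]
end

section
/- Fix λ > 1 and set L = λ² + λ^{-2}, M = λ² − λ^{-2}. For all (x,y,d) ∈ ℝ³ with x > 0, y > 0 and x²y² > d², writing z = √(x²y²−d²) and A = (x²+y²)L/2 + Mz + 2d, one has (L + My²/z)(L + Mx²/z) + 2AM(2d² − x²y²)/z³ ≥ 0. -/
/-- For `λ > 1`, `L = λ² + λ⁻²`, `M = λ² − λ⁻²`, and all `x, y > 0` with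
`x²y² > d²`, writing `z = √(x²y²−d²)` and `A = (x²+y²)L/2 + Mz + 2d`, one has
`(L + My²/z)(L + Mx²/z) + 2AM(2d² − x²y²)/z³ ≥ 0`. -/
theorem Xi_nonneg (l : ℝ) (hl : 1 < l) (x y d L M z A : ℝ)
    (hx : 0 < x) (hy : 0 < y) (hd : d ^ 2 < x ^ 2 * y ^ 2)
    (hL : L = l ^ 2 + 1 / l ^ 2) (hM : M = l ^ 2 - 1 / l ^ 2)
    (hz : z = Real.sqrt (x ^ 2 * y ^ 2 - d ^ 2))
    (hA : A = (x ^ 2 + y ^ 2) * L / 2 + M * z + 2 * d) :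
    0 ≤ (L + M * y ^ 2 / z) * (L + M * x ^ 2 / z)
        + 2 * A * M * (2 * d ^ 2 - x ^ 2 * y ^ 2) / z ^ 3 := by
  have hl0 : (0:ℝ) < l := lt_trans one_pos hl
  have hl2 : 1 < l ^ 2 := by nlinarith
  have hMpos : 0 < M := by
    rw [hM]
    have : 1 / l ^ 2 < 1 := by
      rw [div_lt_one (by positivity)]; exact hl2
    linarith
  have hL2 : 2 ≤ L := by
    have h : l ^ 2 + 1 / l ^ 2 - 2 = (l - 1 / l) ^ 2 := by
      field_simp; ring
    nlinarith [sq_nonneg (l - 1 / l)]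
  have hLM : L ^ 2 = M ^ 2 + 4 := by
    have hl' : l ≠ 0 := ne_of_gt hl0
    rw [hL, hM]; field_simp; ring
  have hzpos : 0 < z := by
    rw [hz]; exact Real.sqrt_pos.2 (by linarith)
  have hz2 : z ^ 2 = x ^ 2 * y ^ 2 - d ^ 2 := by
    rw [hz, sq, Real.mul_self_sqrt (by linarith)]
  have hxy : 0 < x * y := mul_pos hx hy
  have hxyd : 0 < x * y + d := by nlinarith
  have hnum : 0 ≤ L ^ 2 * z ^ 3 + L * M * (x ^ 2 + y ^ 2) * z ^ 2
      + M ^ 2 * x ^ 2 * y ^ 2 * z + 2 * A * M * (2 * d ^ 2 - x ^ 2 * y ^ 2) := by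
    have hid : L ^ 2 * z ^ 3 + L * M * (x ^ 2 + y ^ 2) * z ^ 2
        + M ^ 2 * x ^ 2 * y ^ 2 * z + 2 * A * M * (2 * d ^ 2 - x ^ 2 * y ^ 2)
        = z * (2 * z - M * d) ^ 2 + 2 * M ^ 2 * z * d ^ 2
          + (L - 2) * M * (x ^ 2 + y ^ 2) * d ^ 2
          + 2 * M * (x - y) ^ 2 * d ^ 2 + 4 * M * (x * y + d) * d ^ 2 := by
      subst hA
      linear_combination z ^ 3 * hLM
        + (L * M * (x ^ 2 + y ^ 2) + 4 * M * d + M ^ 2 * z) * hz2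
    rw [hid]
    have h1 : 0 ≤ z * (2 * z - M * d) ^ 2 := by positivity
    have h2 : 0 ≤ 2 * M ^ 2 * z * d ^ 2 := by positivity
    have h3 : 0 ≤ (L - 2) * M * (x ^ 2 + y ^ 2) * d ^ 2 := by
      have : (0:ℝ) ≤ L - 2 := by linarith
      positivity
    have h4 : 0 ≤ 2 * M * (x - y) ^ 2 * d ^ 2 := by positivity
    have h5 : 0 ≤ 4 * M * (x * y + d) * d ^ 2 := by positivity
    linarith
  have hE : (L + M * y ^ 2 / z) * (L + M * x ^ 2 / z)
        + 2 * A * M * (2 * d ^ 2 - x ^ 2 * y ^ 2) / z ^ 3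
      = (L ^ 2 * z ^ 3 + L * M * (x ^ 2 + y ^ 2) * z ^ 2
        + M ^ 2 * x ^ 2 * y ^ 2 * z + 2 * A * M * (2 * d ^ 2 - x ^ 2 * y ^ 2)) / z ^ 3 := by
    field_simp
    ring
  rw [hE]
  exact div_nonneg hnum (by positivity)
end

section
/- The function W̃(F) = h(|Fv|, |Fw|, det F) on real 2×2 matrices is polyconvex: there exists a convex function Φ : ℝ^{2×2} × ℝ → ℝ such that W̃(F) = Φ(F, det F) for every F ∈ ℝ^{2×2}, where v = (1,1)/√2 and w = (1,−1)/√2. -/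
open Matrix

noncomputable section

/-- The relaxed energy density `W̃(F) = h(|Fv|, |Fw|, det F)`. -/
def Wtilde (l : ℝ) (F : Matrix (Fin 2) (Fin 2) ℝ) : ℝ := hfun l (xF F) (yF F) F.det

/-! Write `L = λ² + λ⁻²`, `M = λ² - λ⁻²`. Substituting `u = ξ²`, `v = η²` in the infimum defining
`h` and relaxing `Q = √(ξ²η² - d²)` to `0 ≤ Q`, `Q² + d² ≤ u v` (a rotated second-order cone)
turns `h` into a partial infimum of `u + v + L - 2 √((u + v) L / 2 + M Q + 2 d)` over a convex
set, on which the argument of the square root is a nonnegative linear form; the objective is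
therefore jointly convex and so is its partial infimum `h'(x, y, d)`. As `M ≥ 0`, the
relaxation leaves the infimum unchanged when `|d| ≤ x y`. Finally `h'` is nondecreasing in
`x, y ≥ 0` and `F ↦ |Fv|`, `F ↦ |Fw|` are convex, so `Φ(F, d) = h'(|Fv|, |Fw|, d)` is convex, and
it agrees with `W̃` at `d = det F` because `|det F| ≤ |Fv| |Fw|`. -/

open Set

theorem ConvexOn.convexOn_sInf_fiber {E G : Type*} [AddCommGroup E] [Module ℝ E]
    [AddCommGroup G] [Module ℝ G] {C : Set (E × G)} {φ : E × G → ℝ} (hφ : ConvexOn ℝ C φ)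
    (hne : ∀ x, ∃ z, (x, z) ∈ C) (hbdd : ∀ x, BddBelow {r | ∃ z, (x, z) ∈ C ∧ φ (x, z) = r}) :
    ConvexOn ℝ univ (fun x => sInf {r | ∃ z, (x, z) ∈ C ∧ φ (x, z) = r}) := by
  have hne' (x : E) : {r | ∃ z, (x, z) ∈ C ∧ φ (x, z) = r}.Nonempty :=
    let ⟨z, hz⟩ := hne x; ⟨_, z, hz, rfl⟩
  refine ⟨convex_univ, fun x _ y _ a b ha hb hab => le_of_forall_pos_le_add fun ε hε => ?_⟩
  obtain ⟨_, ⟨z, hz, rfl⟩, hzε⟩ := Real.lt_sInf_add_pos (hne' x) hε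
  obtain ⟨_, ⟨w, hw, rfl⟩, hwε⟩ := Real.lt_sInf_add_pos (hne' y) hε
  have hmem : (a • x + b • y, a • z + b • w) ∈ C := hφ.1 hz hw ha hb hab
  calc sInf {r | ∃ z, (a • x + b • y, z) ∈ C ∧ φ (a • x + b • y, z) = r}
      ≤ φ (a • (x, z) + b • (y, w)) := csInf_le (hbdd _) ⟨_, hmem, rfl⟩
    _ ≤ a • φ (x, z) + b • φ (y, w) := hφ.2 hz hw ha hb hab
    _ ≤ a • (sInf {r | ∃ z, (x, z) ∈ C ∧ φ (x, z) = r} + ε)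
        + b • (sInf {r | ∃ z, (y, z) ∈ C ∧ φ (y, z) = r} + ε) := by
      gcongr
    _ = _ := by simp only [smul_eq_mul]; linear_combination ε * hab

lemma two_le_sq_add_one_div_sq {l : ℝ} (hl : l ≠ 0) : 2 ≤ l ^ 2 + 1 / l ^ 2 := by
  have h : l ^ 2 * (1 / l ^ 2) = 1 := mul_one_div_cancel (pow_ne_zero 2 hl)
  nlinarith [sq_nonneg (l ^ 2 - 1), sq_nonneg (1 / l ^ 2 - 1)]

lemma one_div_sq_le_sq {l : ℝ} (hl : 1 ≤ l ^ 2) : 1 / l ^ 2 ≤ l ^ 2 :=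
  (div_le_one₀ (by positivity)).2 hl |>.trans hl

lemma two_mul_add_le_of_sq_add_sq_le_mul {u₁ v₁ Q₁ d₁ u₂ v₂ Q₂ d₂ : ℝ} (hu₁ : 0 ≤ u₁)
    (hv₁ : 0 ≤ v₁) (hu₂ : 0 ≤ u₂) (hv₂ : 0 ≤ v₂) (h₁ : Q₁ ^ 2 + d₁ ^ 2 ≤ u₁ * v₁)
    (h₂ : Q₂ ^ 2 + d₂ ^ 2 ≤ u₂ * v₂) :
    2 * (Q₁ * Q₂ + d₁ * d₂) ≤ u₁ * v₂ + u₂ * v₁ := by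
  have hprod : (Q₁ ^ 2 + d₁ ^ 2) * (Q₂ ^ 2 + d₂ ^ 2) ≤ (u₁ * v₁) * (u₂ * v₂) :=
    mul_le_mul h₁ h₂ (by positivity) (by positivity)
  have hcs : (Q₁ * Q₂ + d₁ * d₂) ^ 2 ≤ (u₁ * v₂) * (u₂ * v₁) := by
    nlinarith [sq_nonneg (Q₁ * d₂ - Q₂ * d₁)]
  refine (abs_le_of_sq_le_sq' ?_ (by positivity)).2
  nlinarith [sq_nonneg (u₁ * v₂ - u₂ * v₁)]

def liftSet : Set ((ℝ × ℝ × ℝ) × (ℝ × ℝ × ℝ)) :=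
  fun ((x, y, d), (u, v, Q)) => x ^ 2 ≤ u ∧ y ^ 2 ≤ v ∧ 0 ≤ Q ∧ Q ^ 2 + d ^ 2 ≤ u * v

def liftedArg (l : ℝ) : (ℝ × ℝ × ℝ) × (ℝ × ℝ × ℝ) → ℝ :=
  fun ((_, _, d), (u, v, Q)) => (u + v) * (l ^ 2 + 1 / l ^ 2) / 2 + (l ^ 2 - 1 / l ^ 2) * Q + 2 * d

def liftedObjective (l : ℝ) (p : (ℝ × ℝ × ℝ) × (ℝ × ℝ × ℝ)) : ℝ :=
  p.2.1 + p.2.2.1 + (l ^ 2 + 1 / l ^ 2) - 2 * √(liftedArg l p)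

lemma convex_liftSet : Convex ℝ liftSet := by
  rintro ⟨⟨x₁, y₁, d₁⟩, ⟨u₁, v₁, Q₁⟩⟩ ⟨hu₁, hv₁, hQ₁, huv₁⟩
    ⟨⟨x₂, y₂, d₂⟩, ⟨u₂, v₂, Q₂⟩⟩ ⟨hu₂, hv₂, hQ₂, huv₂⟩ a b ha hb hab
  obtain rfl : b = 1 - a := by linarith
  have hcross := two_mul_add_le_of_sq_add_sq_le_mul ((sq_nonneg x₁).trans hu₁)
    ((sq_nonneg y₁).trans hv₁) ((sq_nonneg x₂).trans hu₂) ((sq_nonneg y₂).trans hv₂) huv₁ huv₂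
  simp only [Prod.smul_mk, Prod.mk_add_mk, smul_eq_mul]
  refine ⟨?_, ?_, by positivity, ?_⟩
  · nlinarith [mul_nonneg ha hb, sq_nonneg (x₁ - x₂)]
  · nlinarith [mul_nonneg ha hb, sq_nonneg (y₁ - y₂)]
  · nlinarith [mul_le_mul_of_nonneg_left huv₁ (sq_nonneg a),
      mul_le_mul_of_nonneg_left huv₂ (sq_nonneg (1 - a)),
      mul_le_mul_of_nonneg_left hcross (mul_nonneg ha hb)]

lemma liftedArg_nonneg {l : ℝ} (hl : 1 ≤ l ^ 2) {p : (ℝ × ℝ × ℝ) × (ℝ × ℝ × ℝ)}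
    (hp : p ∈ liftSet) : 0 ≤ liftedArg l p := by
  obtain ⟨⟨x, y, d⟩, ⟨u, v, Q⟩⟩ := p
  obtain ⟨hu, hv, hQ, huv⟩ := hp
  have hL := two_le_sq_add_one_div_sq (l := l) (by rintro rfl; norm_num at hl)
  have hM := sub_nonneg.2 (one_div_sq_le_sq hl)
  have hd : 2 * |d| ≤ u + v := by
    nlinarith [sq_abs d, abs_nonneg d, sq_nonneg (u - v), sq_nonneg x, sq_nonneg y]
  have hS : 0 ≤ u + v := le_trans (by positivity) hd
  show 0 ≤ (u + v) * (l ^ 2 + 1 / l ^ 2) / 2 + (l ^ 2 - 1 / l ^ 2) * Q + 2 * d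
  nlinarith [neg_abs_le d, mul_nonneg hM hQ, mul_le_mul_of_nonneg_left hL hS]

lemma convexOn_liftedObjective {l : ℝ} (hl : 1 ≤ l ^ 2) :
    ConvexOn ℝ liftSet (liftedObjective l) := by
  refine ⟨convex_liftSet, fun p hp q hq a b ha hb hab => ?_⟩
  have hsqrt := Real.strictConcaveOn_sqrt.concaveOn.2 (liftedArg_nonneg hl hp)
    (liftedArg_nonneg hl hq) ha hb hab
  have harg : liftedArg l (a • p + b • q) = a • liftedArg l p + b • liftedArg l q := by
    obtain ⟨⟨x₁, y₁, d₁⟩, ⟨u₁, v₁, Q₁⟩⟩ := p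
    obtain ⟨⟨x₂, y₂, d₂⟩, ⟨u₂, v₂, Q₂⟩⟩ := q
    simp only [liftedArg, Prod.smul_mk, smul_eq_mul]
    ring
  simp only [liftedObjective, harg, Prod.smul_fst, Prod.smul_snd, Prod.fst_add, Prod.snd_add,
    smul_eq_mul] at hsqrt ⊢
  linear_combination 2 * hsqrt - (l ^ 2 + 1 / l ^ 2) * hab

lemma div_sq_le_liftedObjective {l x y d : ℝ} (hl : 1 ≤ l ^ 2) {z : ℝ × ℝ × ℝ}
    (hz : ((x, y, d), z) ∈ liftSet) :
    (1 - 2 * |d|) / l ^ 2 ≤ liftedObjective l ((x, y, d), z) := by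
  have hA := liftedArg_nonneg hl hz
  obtain ⟨u, v, Q⟩ := z
  obtain ⟨hu, hv, hQ, huv⟩ := hz
  have hl0 : 0 < l ^ 2 := by linarith
  have hM := sub_nonneg.2 (one_div_sq_le_sq hl)
  have hQ2 : 2 * Q ≤ u + v := by
    nlinarith [sq_nonneg (u - v), sq_nonneg d, sq_nonneg x, sq_nonneg y]
  have hA_le : liftedArg l ((x, y, d), (u, v, Q)) ≤ l ^ 2 * (u + v) + 2 * |d| := by
    show (u + v) * (l ^ 2 + 1 / l ^ 2) / 2 + (l ^ 2 - 1 / l ^ 2) * Q + 2 * d ≤ _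
    nlinarith [le_abs_self d, mul_le_mul_of_nonneg_left hQ2 hM]
  have hamgm : 2 * √(liftedArg l ((x, y, d), (u, v, Q)))
      ≤ liftedArg l ((x, y, d), (u, v, Q)) / l ^ 2 + l ^ 2 := by
    rw [div_add' _ _ _ hl0.ne', le_div_iff₀ hl0]
    nlinarith [sq_nonneg (√(liftedArg l ((x, y, d), (u, v, Q))) - l ^ 2), Real.sq_sqrt hA]
  have hA_div : liftedArg l ((x, y, d), (u, v, Q)) / l ^ 2 ≤ u + v + 2 * |d| / l ^ 2 := by
    calc _ ≤ (l ^ 2 * (u + v) + 2 * |d|) / l ^ 2 := by gcongr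
      _ = _ := by rw [add_div, mul_div_cancel_left₀ _ hl0.ne']
  simp only [liftedObjective]
  rw [sub_div]
  linarith

def liftedEnergy (l : ℝ) (p : ℝ × ℝ × ℝ) : ℝ :=
  sInf {r | ∃ z, (p, z) ∈ liftSet ∧ liftedObjective l (p, z) = r}

lemma exists_mem_liftSet (p : ℝ × ℝ × ℝ) : ∃ z, (p, z) ∈ liftSet := by
  obtain ⟨x, y, d⟩ := p
  refine ⟨(x ^ 2 + |d|, y ^ 2 + |d|, 0), le_add_of_nonneg_right (abs_nonneg d),
    le_add_of_nonneg_right (abs_nonneg d), le_rfl, ?_⟩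
  nlinarith [sq_abs d, abs_nonneg d, sq_nonneg x, sq_nonneg y,
    mul_nonneg (sq_nonneg x) (sq_nonneg y)]

lemma bddBelow_liftedObjective {l : ℝ} (hl : 1 ≤ l ^ 2) (p : ℝ × ℝ × ℝ) :
    BddBelow {r | ∃ z, (p, z) ∈ liftSet ∧ liftedObjective l (p, z) = r} := by
  obtain ⟨x, y, d⟩ := p
  exact ⟨_, by rintro _ ⟨z, hz, rfl⟩; exact div_sq_le_liftedObjective hl hz⟩

lemma convexOn_liftedEnergy {l : ℝ} (hl : 1 ≤ l ^ 2) : ConvexOn ℝ univ (liftedEnergy l) :=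
  (convexOn_liftedObjective hl).convexOn_sInf_fiber exists_mem_liftSet
    (bddBelow_liftedObjective hl)

lemma liftedEnergy_mono {l x x' y y' : ℝ} (hl : 1 ≤ l ^ 2) (hx : 0 ≤ x) (hxx' : x ≤ x')
    (hy : 0 ≤ y) (hyy' : y ≤ y') (d : ℝ) :
    liftedEnergy l (x, y, d) ≤ liftedEnergy l (x', y', d) := by
  obtain ⟨z, hz⟩ := exists_mem_liftSet (x', y', d)
  refine csInf_le_csInf (bddBelow_liftedObjective hl _) ⟨_, z, hz, rfl⟩ ?_
  rintro _ ⟨⟨u, v, Q⟩, ⟨hu, hv, hQ, huv⟩, rfl⟩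
  exact ⟨(u, v, Q), ⟨(pow_le_pow_left₀ hx hxx' 2).trans hu, (pow_le_pow_left₀ hy hyy' 2).trans hv,
    hQ, huv⟩, rfl⟩

lemma gfun_sqrt_le_liftedObjective {l x y d u v Q : ℝ} (hl : 1 ≤ l ^ 2)
    (hz : ((x, y, d), (u, v, Q)) ∈ liftSet) :
    gfun l √u √v d ≤ liftedObjective l ((x, y, d), (u, v, Q)) := by
  obtain ⟨hu, hv, hQ, huv⟩ := hz
  have hQ' : Q ≤ √(u * v - d ^ 2) := (le_abs_self Q).trans (Real.abs_le_sqrt (by linarith))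
  have hM := sub_nonneg.2 (one_div_sq_le_sq hl)
  simp only [gfun, Afun, liftedObjective, liftedArg]
  rw [Real.sq_sqrt ((sq_nonneg x).trans hu), Real.sq_sqrt ((sq_nonneg y).trans hv)]
  gcongr

lemma hfun_eq_liftedEnergy {l x y d : ℝ} (hl : 1 ≤ l ^ 2) (hx : 0 ≤ x) (hy : 0 ≤ y)
    (hd : |d| ≤ x * y) : hfun l x y d = liftedEnergy l (x, y, d) := by
  have hsub : {r | ∃ ξ η : ℝ, x ≤ ξ ∧ y ≤ η ∧ r = gfun l ξ η d}
      ⊆ {r | ∃ z, ((x, y, d), z) ∈ liftSet ∧ liftedObjective l ((x, y, d), z) = r} := by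
    rintro _ ⟨ξ, η, hξ, hη, rfl⟩
    have hd' : |d| ≤ ξ * η := hd.trans (mul_le_mul hξ hη hy (hx.trans hξ))
    have hd2 : d ^ 2 ≤ ξ ^ 2 * η ^ 2 := by
      rw [← sq_abs d, ← mul_pow]; exact pow_le_pow_left₀ (abs_nonneg d) hd' 2
    refine ⟨(ξ ^ 2, η ^ 2, √(ξ ^ 2 * η ^ 2 - d ^ 2)), ⟨pow_le_pow_left₀ hx hξ 2,
      pow_le_pow_left₀ hy hη 2, Real.sqrt_nonneg _, ?_⟩, rfl⟩
    rw [Real.sq_sqrt (sub_nonneg.2 hd2)]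
    linarith
  have hbdd := bddBelow_liftedObjective hl (x, y, d)
  refine le_antisymm ?_ (csInf_le_csInf hbdd ⟨_, x, y, le_rfl, le_rfl, rfl⟩ hsub)
  obtain ⟨z, hz⟩ := exists_mem_liftSet (x, y, d)
  refine le_csInf ⟨_, z, hz, rfl⟩ ?_
  rintro _ ⟨⟨u, v, Q⟩, hz, rfl⟩
  have hxu : x ≤ √u := (le_abs_self x).trans (Real.abs_le_sqrt hz.1)
  have hyv : y ≤ √v := (le_abs_self y).trans (Real.abs_le_sqrt hz.2.1)
  exact (csInf_le (hbdd.mono hsub) ⟨√u, √v, hxu, hyv, rfl⟩).trans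
    (gfun_sqrt_le_liftedObjective hl hz)

lemma convexOn_norm_mulVec {m n : Type*} [Fintype m] [Fintype n] (v : n → ℝ) :
    ConvexOn ℝ univ (fun F : Matrix m n ℝ => ‖WithLp.toLp 2 (F *ᵥ v)‖) := by
  refine ⟨convex_univ, fun F _ G _ a b ha hb _ => ?_⟩
  simp only [add_mulVec, smul_mulVec, WithLp.toLp_add, WithLp.toLp_smul, smul_eq_mul]
  refine (norm_add_le _ _).trans_eq ?_
  rw [norm_smul, norm_smul, Real.norm_of_nonneg ha, Real.norm_of_nonneg hb]

lemma abs_cross_le_norm_mul_norm (a b : Fin 2 → ℝ) :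
    |a 0 * b 1 - a 1 * b 0| ≤ ‖WithLp.toLp 2 a‖ * ‖WithLp.toLp 2 b‖ := by
  refine abs_le_of_sq_le_sq ?_ (by positivity)
  simp only [mul_pow, EuclideanSpace.real_norm_sq_eq, Fin.sum_univ_two]
  nlinarith [sq_nonneg (a 0 * b 0 + a 1 * b 1)]

lemma xF_eq_norm (F : Matrix (Fin 2) (Fin 2) ℝ) : xF F = ‖WithLp.toLp 2 (F *ᵥ vvec)‖ := by
  simp [xF, EuclideanSpace.norm_eq]

lemma yF_eq_norm (F : Matrix (Fin 2) (Fin 2) ℝ) : yF F = ‖WithLp.toLp 2 (F *ᵥ wvec)‖ := by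
  simp [yF, EuclideanSpace.norm_eq]

lemma cross_mulVec_vvec_wvec (F : Matrix (Fin 2) (Fin 2) ℝ) :
    (F *ᵥ vvec) 0 * (F *ᵥ wvec) 1 - (F *ᵥ vvec) 1 * (F *ᵥ wvec) 0 = -F.det := by
  have h2 : (1 / √2) ^ 2 = 1 / 2 := by rw [div_pow, Real.sq_sqrt zero_le_two, one_pow]
  simp only [mulVec, dotProduct, vvec, wvec, Fin.sum_univ_two, det_fin_two, cons_val_zero,
    cons_val_one, cons_val_fin_one]
  linear_combination (-2 * F 0 0 * F 1 1 + 2 * F 0 1 * F 1 0) * h2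

lemma abs_det_le_xF_mul_yF (F : Matrix (Fin 2) (Fin 2) ℝ) : |F.det| ≤ xF F * yF F := by
  rw [← abs_neg, ← cross_mulVec_vvec_wvec, xF_eq_norm, yF_eq_norm]
  exact abs_cross_le_norm_mul_norm _ _

/-- `W̃` is polyconvex: there is a convex `Φ` on `ℝ^{2×2} × ℝ` with
`W̃(F) = Φ(F, det F)`. -/
theorem Wtilde_polyconvex (l : ℝ) (hl : 1 < l) :
    ∃ Φ : Matrix (Fin 2) (Fin 2) ℝ × ℝ → ℝ, ConvexOn ℝ Set.univ Φ ∧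
      ∀ F : Matrix (Fin 2) (Fin 2) ℝ, Wtilde l F = Φ (F, F.det) := by
  have hl2 : 1 ≤ l ^ 2 := by nlinarith
  refine ⟨fun p => liftedEnergy l (xF p.1, yF p.1, p.2),
    ⟨convex_univ, fun p _ q _ a b ha hb hab => ?_⟩,
    fun F => hfun_eq_liftedEnergy hl2 (Real.sqrt_nonneg _) (Real.sqrt_nonneg _)
      (abs_det_le_xF_mul_yF F)⟩
  have hx := (convexOn_norm_mulVec vvec).2 (mem_univ p.1) (mem_univ q.1) ha hb hab
  have hy := (convexOn_norm_mulVec wvec).2 (mem_univ p.1) (mem_univ q.1) ha hb hab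
  simp only [← xF_eq_norm, ← yF_eq_norm, smul_eq_mul] at hx hy
  calc liftedEnergy l (xF (a • p + b • q).1, yF (a • p + b • q).1, (a • p + b • q).2)
      ≤ liftedEnergy l (a • (xF p.1, yF p.1, p.2) + b • (xF q.1, yF q.1, q.2)) := by
        simp only [Prod.smul_mk, Prod.mk_add_mk, Prod.snd_add, Prod.smul_snd, smul_eq_mul]
        exact liftedEnergy_mono hl2 (Real.sqrt_nonneg _) hx (Real.sqrt_nonneg _) hy _
    _ ≤ a • liftedEnergy l (xF p.1, yF p.1, p.2) + b • liftedEnergy l (xF q.1, yF q.1, q.2) :=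
        (convexOn_liftedEnergy hl2).2 trivial trivial ha hb hab
end
end
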